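/- Let d ≥ 1, let f : ℝ^d → ℂ be a Schwartz function, and let t > 0. Then for every x ∈ ℝ^d, F⁻¹[ ξ ↦ e^{−it|ξ|²} (F f)(ξ) ](x) = (2it)^{−d/2} e^{i|x|²/(4t)} F[ y ↦ e^{i|y|²/(4t)} f(y) ]( x/(2t) ), where (2it)^{−d/2} is defined using the principal branch of the logarithm. That is, the free Schrödinger propagator factors as e^{itΔ} = M(t) D(t) F M(t), with M(t) multiplication by e^{i|x|²/(4t)} and D(t)h(x) = (2it)^{−d/2} h(x/(2t)). -/

import Mathlib

open MeasureTheory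

/-- The Fourier transform `F[f](ξ) = (2π)^{−d/2} ∫ e^{−i x·ξ} f(x) dx`. -/
noncomputable def ft {d : ℕ} (f : EuclideanSpace ℝ (Fin d) → ℂ)
    (ξ : EuclideanSpace ℝ (Fin d)) : ℂ :=
  (((2 * Real.pi) ^ (-(d : ℝ) / 2) : ℝ) : ℂ) *
    ∫ x, Complex.exp (-(Complex.I * ((inner ℝ x ξ : ℝ) : ℂ))) * f x

/-- The inverse Fourier transform `F⁻¹[g](x) = (2π)^{−d/2} ∫ e^{i x·ξ} g(ξ) dξ`. -/
noncomputable def ift {d : ℕ} (g : EuclideanSpace ℝ (Fin d) → ℂ)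
    (x : EuclideanSpace ℝ (Fin d)) : ℂ :=
  (((2 * Real.pi) ^ (-(d : ℝ) / 2) : ℝ) : ℂ) *
    ∫ ξ, Complex.exp (Complex.I * ((inner ℝ x ξ : ℝ) : ℂ)) * g ξ

/-
For `Re b > 0` the multiplier `e^{-b|ξ|²}` is a Gaussian, so Fubini and the Fourier transform of
a Gaussian turn `∫ e^{i x·ξ - b|ξ|²} ∫ e^{-i y·ξ} f(y) dy dξ` into
`(π/b)^{d/2} ∫ e^{-|x-y|²/(4b)} f(y) dy`. Every exponential involved has modulus at most one on
`Re b ≥ 0`, so by dominated convergence both sides are continuous on the closed right half-plane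
minus the origin, and the identity extends to `b = it`. Expanding `|x - y|² = |x|² - 2x·y + |y|²`
in the kernel `e^{i|x-y|²/(4t)}` then gives the factorization, and
`(2π)^{-d/2} (π/(it))^{d/2} = (2it)^{-d/2}` because `2it` is off the branch cut.
-/

open Complex MeasureTheory Filter Topology FourierTransform Module GaussianFourier
open scoped InnerProductSpace Real

theorem continuousOn_integral_cexp_mul {α : Type*} [MeasurableSpace α] {μ : Measure α}
    {S : Set ℂ} {φ : ℂ → α → ℂ} {g : α → ℂ} (hg : Integrable g μ)
    (hφ_meas : ∀ b ∈ S, AEStronglyMeasurable (φ b) μ)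
    (hφ_cont : ∀ a, ContinuousOn (φ · a) S) (hφ_re : ∀ b ∈ S, ∀ a, (φ b a).re ≤ 0) :
    ContinuousOn (fun b => ∫ a, cexp (φ b a) * g a ∂μ) S := by
  refine continuousOn_of_dominated (bound := fun a => ‖g a‖)
    (fun b hb => (continuous_exp.comp_aestronglyMeasurable (hφ_meas b hb)).mul
      hg.aestronglyMeasurable)
    (fun b hb => Eventually.of_forall fun a => ?_) hg.norm
    (Eventually.of_forall fun a => (continuous_exp.comp_continuousOn (hφ_cont a)).mul
      continuousOn_const)
  rw [norm_mul, norm_exp]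
  exact mul_le_of_le_one_left (norm_nonneg _) (Real.exp_le_one_iff.2 (hφ_re b hb a))

namespace Complex

theorem re_neg_ofReal_div_nonpos {c : ℝ} (hc : 0 ≤ c) {b : ℂ} (hb : 0 ≤ b.re) :
    (-(c : ℂ) / b).re ≤ 0 := by
  rw [div_eq_mul_inv, ← ofReal_neg, re_ofReal_mul, inv_re]
  exact mul_nonpos_of_nonpos_of_nonneg (neg_nonpos.2 hc) (div_nonneg hb (normSq_nonneg b))

theorem div_mem_slitPlane_of_re_nonneg {r : ℝ} (hr : 0 < r) {b : ℂ} (hb : 0 ≤ b.re)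
    (hb0 : b ≠ 0) : (r : ℂ) / b ∈ slitPlane := by
  have hnormSq : 0 < normSq b := normSq_pos.2 hb0
  rw [mem_slitPlane_iff, div_re, div_im]
  simp only [ofReal_re, ofReal_im, zero_mul, add_zero, zero_div, zero_sub, neg_ne_zero]
  rcases hb.lt_or_eq with hb | hb
  · exact Or.inl (by positivity)
  · refine Or.inr (div_ne_zero (mul_ne_zero hr.ne' fun him => hb0 (ext hb.symm him))
      hnormSq.ne')

theorem ofReal_mul_cpow {r : ℝ} (hr : 0 < r) {z : ℂ} (hz : z ≠ 0) (w : ℂ) :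
    ((r : ℂ) * z) ^ w = (r : ℂ) ^ w * z ^ w := by
  have hr' : (r : ℂ) ≠ 0 := ofReal_ne_zero.2 hr.ne'
  rw [cpow_def_of_ne_zero (mul_ne_zero hr' hz), log_ofReal_mul hr hz, cpow_def_of_ne_zero hr',
    cpow_def_of_ne_zero hz, ← exp_add, ← ofReal_log hr.le, add_mul]

end Complex

theorem continuousOn_integral_cexp_neg_norm_sub_sq_div {V : Type*} [NormedAddCommGroup V]
    [MeasurableSpace V] [OpensMeasurableSpace V] {μ : Measure V} {f : V → ℂ}
    (hf : Integrable f μ) (x : V) :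
    ContinuousOn (fun b : ℂ => ∫ y, cexp (-((‖x - y‖ ^ 2 : ℝ) : ℂ) / (4 * b)) * f y ∂μ)
      {b | 0 ≤ b.re ∧ b ≠ 0} :=
  continuousOn_integral_cexp_mul hf
    (fun b _ => (by fun_prop : Continuous _).aestronglyMeasurable)
    (fun y => continuousOn_const.div (continuousOn_const.mul continuousOn_id)
      fun b hb => mul_ne_zero (by norm_num) hb.2)
    (fun b hb y => re_neg_ofReal_div_nonpos (by positivity) (by simpa using hb.1))

section InnerProductSpace

variable {V : Type*} [NormedAddCommGroup V] [InnerProductSpace ℝ V]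

theorem cexp_neg_norm_sub_sq_div_I_mul (x y : V) {t : ℝ} (ht : t ≠ 0) :
    cexp (-((‖x - y‖ ^ 2 : ℝ) : ℂ) / (4 * (I * t))) =
      cexp (I * ((‖x‖ ^ 2 / (4 * t) : ℝ) : ℂ)) *
        (cexp (-(I * ((⟪y, (2 * t)⁻¹ • x⟫_ℝ : ℝ) : ℂ))) *
          cexp (I * ((‖y‖ ^ 2 / (4 * t) : ℝ) : ℂ))) := by
  have htC : (t : ℂ) ≠ 0 := ofReal_ne_zero.2 ht
  have hI : ∀ c : ℂ, -c / (4 * (I * t)) = I * c / (4 * t) := fun c => by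
    rw [div_eq_div_iff (by simp [htC]) (by simp [htC])]
    linear_combination (-4 * c * t) * I_sq
  rw [← exp_add, ← exp_add, hI, real_inner_smul_right, norm_sub_sq_real, real_inner_comm x y]
  congr 1
  push_cast
  field_simp
  ring

variable [MeasurableSpace V] [BorelSpace V]

theorem continuousOn_integral_cexp_inner_sub_mul_norm_sq {μ : Measure V} {g : V → ℂ}
    (hg : Integrable g μ) (x : V) :
    ContinuousOn (fun b : ℂ => ∫ ξ, cexp (I * ⟪x, ξ⟫_ℝ - b * ((‖ξ‖ ^ 2 : ℝ) : ℂ)) * g ξ ∂μ)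
      {b | 0 ≤ b.re} := by
  refine continuousOn_integral_cexp_mul hg
    (fun b _ => (by fun_prop : Continuous _).aestronglyMeasurable) (fun ξ => by fun_prop)
    (fun b hb ξ => ?_)
  rw [sub_re, mul_comm I, re_ofReal_mul, I_re, mul_zero, zero_sub, mul_comm b, re_ofReal_mul,
    neg_nonpos]
  exact mul_nonneg (by positivity) hb

variable [FiniteDimensional ℝ V]

theorem integral_cexp_neg_inner_mul_eq_fourier (f : V → ℂ) (ξ : V) :
    ∫ y, cexp (-(I * ⟪y, ξ⟫_ℝ)) * f y = 𝓕 f ((2 * π)⁻¹ • ξ) := by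
  rw [Real.fourier_eq']
  refine integral_congr_ae (Eventually.of_forall fun y => ?_)
  simp only [smul_eq_mul, real_inner_smul_right]
  congr 2
  field_simp
  push_cast
  ring

theorem SchwartzMap.integrable_integral_cexp_neg_inner_mul (f : SchwartzMap V ℂ) :
    Integrable fun ξ => ∫ y, cexp (-(I * ⟪y, ξ⟫_ℝ)) * f y := by
  simp_rw [integral_cexp_neg_inner_mul_eq_fourier]
  rw [integrable_comp_smul_iff volume (𝓕 (f : V → ℂ)) (by positivity), ← SchwartzMap.fourier_coe]
  exact (𝓕 f).integrable

theorem integral_cexp_inner_sub_mul_norm_sq_mul_integral {f : V → ℂ} (hf : Integrable f)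
    {b : ℂ} (hb : 0 < b.re) (x : V) :
    ∫ ξ, cexp (I * ⟪x, ξ⟫_ℝ - b * ((‖ξ‖ ^ 2 : ℝ) : ℂ)) * ∫ y, cexp (-(I * ⟪y, ξ⟫_ℝ)) * f y
      = (π / b) ^ (finrank ℝ V / 2 : ℂ) *
          ∫ y, cexp (-((‖x - y‖ ^ 2 : ℝ) : ℂ) / (4 * b)) * f y := by
  set F : V → V → ℂ := fun ξ y => cexp (-b * ‖ξ‖ ^ 2 + I * ⟪x - y, ξ⟫_ℝ) * f y
  have hF : Integrable (Function.uncurry F) (volume.prod volume) := by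
    refine ((integrable_cexp_neg_mul_sq_norm_add hb 0 (0 : V)).norm.mul_prod hf.norm).mono'
      ((by fun_prop : Continuous fun p : V × V => cexp (-b * ‖p.1‖ ^ 2 + I * ⟪x - p.2, p.1⟫_ℝ)
        ).aestronglyMeasurable.mul hf.aestronglyMeasurable.comp_snd)
      (Eventually.of_forall fun p => le_of_eq ?_)
    simp [F, Function.uncurry_def, norm_exp, ← ofReal_pow]
  calc ∫ ξ, cexp (I * ⟪x, ξ⟫_ℝ - b * ((‖ξ‖ ^ 2 : ℝ) : ℂ)) * ∫ y, cexp (-(I * ⟪y, ξ⟫_ℝ)) * f y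
      = ∫ ξ, ∫ y, F ξ y := by
        refine integral_congr_ae (Eventually.of_forall fun ξ => ?_)
        simp only [F, ← integral_const_mul, ← mul_assoc, ← exp_add, inner_sub_left]
        congr! 4
        push_cast
        ring
    _ = ∫ y, (∫ ξ, cexp (-b * ‖ξ‖ ^ 2 + I * ⟪x - y, ξ⟫_ℝ)) * f y := by
        rw [integral_integral_swap hF]
        simp only [F, integral_mul_const]
    _ = _ := by
        simp only [integral_cexp_neg_mul_sq_norm_add hb, ← integral_const_mul, mul_assoc]
        refine integral_congr_ae (Eventually.of_forall fun y => ?_)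
        push_cast
        rw [I_sq, neg_one_mul]

theorem eqOn_integral_cexp_inner_sub_mul_norm_sq_mul_integral {f : V → ℂ}
    (hf : Integrable f) (hf' : Integrable fun ξ => ∫ y, cexp (-(I * ⟪y, ξ⟫_ℝ)) * f y) (x : V) :
    Set.EqOn
      (fun b : ℂ => ∫ ξ, cexp (I * ⟪x, ξ⟫_ℝ - b * ((‖ξ‖ ^ 2 : ℝ) : ℂ)) *
        ∫ y, cexp (-(I * ⟪y, ξ⟫_ℝ)) * f y)
      (fun b : ℂ => (π / b) ^ (finrank ℝ V / 2 : ℂ) *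
        ∫ y, cexp (-((‖x - y‖ ^ 2 : ℝ) : ℂ) / (4 * b)) * f y)
      {b | 0 ≤ b.re ∧ b ≠ 0} := by
  refine Set.EqOn.of_subset_closure (s := {b : ℂ | 0 < b.re})
    (fun b (hb : 0 < b.re) => integral_cexp_inner_sub_mul_norm_sq_mul_integral hf hb x)
    ((continuousOn_integral_cexp_inner_sub_mul_norm_sq hf' x).mono fun b hb => hb.1)
    (((continuousOn_const.div continuousOn_id fun b hb => hb.2).cpow_const
      fun b hb => div_mem_slitPlane_of_re_nonneg Real.pi_pos hb.1 hb.2).mul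
      (continuousOn_integral_cexp_neg_norm_sub_sq_div hf x))
    (fun b (hb : 0 < b.re) => ⟨hb.le, fun h => by simp [h] at hb⟩) (fun b hb => ?_)
  rw [closure_setOfPred_lt_re]
  exact hb.1

end InnerProductSpace

theorem two_pi_cpow_neg_mul_pi_div_I_mul_cpow {t : ℝ} (ht : t ≠ 0) (w : ℂ) :
    (2 * π : ℂ) ^ (-w) * (π / (I * t)) ^ w = (2 * I * t) ^ (-w) := by
  have htC : (t : ℂ) ≠ 0 := ofReal_ne_zero.2 ht
  have h2It : 2 * I * (t : ℂ) ≠ 0 := by simp [htC]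
  have harg : (2 * I * (t : ℂ)).arg ≠ π := fun h => by
    simpa [ht] using (arg_eq_pi_iff.1 h).2
  have h2π : (2 * π : ℂ) ^ w ≠ 0 := by simp [cpow_eq_zero_iff, Real.pi_ne_zero]
  rw [show (π : ℂ) / (I * t) = ((2 * π : ℝ) : ℂ) * (2 * I * t)⁻¹ by push_cast; field_simp,
    ofReal_mul_cpow (by positivity) (inv_ne_zero h2It), inv_cpow _ _ harg, cpow_neg, cpow_neg]
  push_cast
  field_simp

theorem stmt3_general (d : ℕ) (f : SchwartzMap (EuclideanSpace ℝ (Fin d)) ℂ)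
    (t : ℝ) (ht : 0 < t) (x : EuclideanSpace ℝ (Fin d)) :
    ift (fun ξ => Complex.exp (-(Complex.I * ((t * ‖ξ‖ ^ 2 : ℝ) : ℂ))) *
        ft (fun y => f y) ξ) x
      = (2 * Complex.I * (t : ℂ)) ^ (-(d : ℂ) / 2) *
          Complex.exp (Complex.I * ((‖x‖ ^ 2 / (4 * t) : ℝ) : ℂ)) *
          ft (fun y => Complex.exp (Complex.I * ((‖y‖ ^ 2 / (4 * t) : ℝ) : ℂ)) * f y)
            ((2 * t)⁻¹ • x) := by
  set C : ℂ := (((2 * π) ^ (-(d : ℝ) / 2) : ℝ) : ℂ) with hC_def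
  have hC : C * (π / (I * t)) ^ ((d : ℂ) / 2) = (2 * I * t) ^ (-(d : ℂ) / 2) := by
    rw [hC_def, ofReal_cpow (by positivity), neg_div (2 : ℂ),
      ← two_pi_cpow_neg_mul_pi_div_I_mul_cpow ht.ne']
    push_cast
    rw [neg_div]
  have kernel := eqOn_integral_cexp_inner_sub_mul_norm_sq_mul_integral f.integrable
    f.integrable_integral_cexp_neg_inner_mul x
    (show I * (t : ℂ) ∈ {b : ℂ | 0 ≤ b.re ∧ b ≠ 0} from
      ⟨by simp, mul_ne_zero I_ne_zero (ofReal_ne_zero.2 ht.ne')⟩)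
  simp only [finrank_euclideanSpace_fin] at kernel
  calc ift _ x = C * (C * ∫ ξ, cexp (I * ⟪x, ξ⟫_ℝ - I * t * ((‖ξ‖ ^ 2 : ℝ) : ℂ)) *
          ∫ y, cexp (-(I * ⟪y, ξ⟫_ℝ)) * f y) := by
        rw [ift, ← hC_def]
        congr 1
        rw [← integral_const_mul]
        refine integral_congr_ae (Eventually.of_forall fun ξ => ?_)
        dsimp only [ft]
        rw [← hC_def, ofReal_mul, ← mul_assoc I, sub_eq_add_neg, exp_add]
        ring
    _ = C * (C * ((π / (I * t)) ^ ((d : ℂ) / 2) *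
          ∫ y, cexp (-((‖x - y‖ ^ 2 : ℝ) : ℂ) / (4 * (I * t))) * f y)) := by
        rw [kernel]
    _ = _ := by
        rw [← hC, ft, ← hC_def]
        simp only [cexp_neg_norm_sub_sq_div_I_mul x _ ht.ne', mul_assoc, integral_const_mul]
        ring

/-- The free Schrödinger propagator factors as `e^{itΔ} = M(t) D(t) F M(t)`, where
`M(t)` is multiplication by `e^{i|x|²/(4t)}` and `D(t)h(x) = (2it)^{−d/2} h(x/(2t))`,
with `(2it)^{−d/2}` taken in the principal branch. -/
theorem stmt3 (d : ℕ) (hd : 1 ≤ d) (f : SchwartzMap (EuclideanSpace ℝ (Fin d)) ℂ)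
    (t : ℝ) (ht : 0 < t) (x : EuclideanSpace ℝ (Fin d)) :
    ift (fun ξ => Complex.exp (-(Complex.I * ((t * ‖ξ‖ ^ 2 : ℝ) : ℂ))) *
        ft (fun y => f y) ξ) x
      = (2 * Complex.I * (t : ℂ)) ^ (-(d : ℂ) / 2) *
          Complex.exp (Complex.I * ((‖x‖ ^ 2 / (4 * t) : ℝ) : ℂ)) *
          ft (fun y => Complex.exp (Complex.I * ((‖y‖ ^ 2 / (4 * t) : ℝ) : ℂ)) * f y)
            ((2 * t)⁻¹ • x) :=
  stmt3_general d f t ht x
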